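/- Let X be a real n×k matrix with XᵀX invertible such that the all-ones vector ι lies in the column space of X, let Z be a real n-vector with Z^{⊥X} := (I − P_X)Z ≠ 0, let W = [X Z], and let Y be a real n-vector with Yᵀ M⁰ Y ≠ 0. Then the total R² measures satisfy R²_{Y∼X+Z} = R²_{Y∼X} + R²_{Y∼Z^{⊥X}}, where R²_{Y∼X+Z} = (Yᵀ P_W M⁰ P_W Y)/(Yᵀ M⁰ Y), R²_{Y∼X} = (Yᵀ P_X M⁰ P_X Y)/(Yᵀ M⁰ Y), and R²_{Y∼Z^{⊥X}} = (Yᵀ P_{Z^{⊥X}} M⁰ P_{Z^{⊥X}} Y)/(Yᵀ M⁰ Y). -/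

import Mathlib

open Matrix

/-- Projection matrix onto the column space of `A`: `P_A = A (Aᵀ A)⁻¹ Aᵀ`. -/
noncomputable def Pmat {n m : ℕ} (A : Matrix (Fin n) (Fin m) ℝ) : Matrix (Fin n) (Fin n) ℝ :=
  A * (Aᵀ * A)⁻¹ * Aᵀ

/-- Projection matrix onto the span of a single column vector `z`, written with
scalar division: `P_z = z zᵀ / (zᵀ z)`. -/
noncomputable def Pvec {n : ℕ} (z : Matrix (Fin n) (Fin 1) ℝ) : Matrix (Fin n) (Fin n) ℝ :=
  ((zᵀ * z) 0 0)⁻¹ • (z * zᵀ)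

/-- The deviation-from-means matrix `M⁰ = I - (1/n) ι ιᵀ`. -/
noncomputable def M0 (n : ℕ) : Matrix (Fin n) (Fin n) ℝ :=
  (1 : Matrix (Fin n) (Fin n) ℝ) - (n : ℝ)⁻¹ • Matrix.of (fun _ _ => (1 : ℝ))

/-- The augmented matrix `W = [X Z]` obtained by appending the column `Z` to `X`. -/
noncomputable def appendCol {n k : ℕ} (X : Matrix (Fin n) (Fin k) ℝ)
    (Z : Matrix (Fin n) (Fin 1) ℝ) : Matrix (Fin n) (Fin (k + 1)) ℝ :=
  Matrix.of fun i => Fin.snoc (X i) (Z i 0)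

/-- Total R² of a regression of `Y` on regressors with projection matrix `P`:
`R² = (Yᵀ P M⁰ P Y)/(Yᵀ M⁰ Y)`. -/
noncomputable def totalR2 {n : ℕ} (Y : Matrix (Fin n) (Fin 1) ℝ)
    (P : Matrix (Fin n) (Fin n) ℝ) : ℝ :=
  (Yᵀ * P * M0 n * P * Y) 0 0 / (Yᵀ * M0 n * Y) 0 0

lemma mul_appendCol' {n k : ℕ} (A : Matrix (Fin n) (Fin n) ℝ) (X : Matrix (Fin n) (Fin k) ℝ)
    (Z : Matrix (Fin n) (Fin 1) ℝ) :
    A * appendCol X Z = appendCol (A * X) (A * Z) := by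
  ext i j
  refine Fin.lastCases ?_ ?_ j
  · simp [appendCol, Matrix.mul_apply]
  · intro p
    simp [appendCol, Matrix.mul_apply]

lemma appendCol_inj {n k : ℕ} {X X' : Matrix (Fin n) (Fin k) ℝ}
    {Z Z' : Matrix (Fin n) (Fin 1) ℝ} (h : appendCol X Z = appendCol X' Z') :
    X = X' ∧ Z = Z' := by
  constructor
  · ext i p
    have := congrFun (congrFun h i) p.castSucc
    simpa [appendCol] using this
  · ext i j
    have := congrFun (congrFun h i) (Fin.last k)
    have hj : j = 0 := Subsingleton.elim _ _
    subst hj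
    simpa [appendCol] using this

lemma mulVec_appendCol' {n k : ℕ} (X : Matrix (Fin n) (Fin k) ℝ)
    (Z : Matrix (Fin n) (Fin 1) ℝ) (u : Fin (k + 1) → ℝ) :
    (appendCol X Z) *ᵥ u =
      X *ᵥ (fun p => u p.castSucc) + u (Fin.last k) • (fun i => Z i 0) := by
  ext i
  simp only [Matrix.mulVec, dotProduct, appendCol, Matrix.of_apply,
    Pi.add_apply, Pi.smul_apply, smul_eq_mul]
  rw [Fin.sum_univ_castSucc]
  simp [mul_comm]

/-- `R²_{Y∼X+Z} = R²_{Y∼X} + R²_{Y∼Z^{⊥X}}`. -/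
theorem R2_decomp {n k : ℕ} (X : Matrix (Fin n) (Fin k) ℝ)
    (Z Y : Matrix (Fin n) (Fin 1) ℝ)
    (hX : IsUnit (Xᵀ * X))
    (hiota : ∃ v : Fin k → ℝ, X *ᵥ v = fun _ => (1 : ℝ))
    (hZperp : Z - Pmat X * Z ≠ 0)
    (hY : (Yᵀ * M0 n * Y) 0 0 ≠ 0) :
    totalR2 Y (Pmat (appendCol X Z)) =
      totalR2 Y (Pmat X) + totalR2 Y (Pvec (Z - Pmat X * Z)) := by
  classical
  set P : Matrix (Fin n) (Fin n) ℝ := Pmat X with hPdef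
  set Zp : Matrix (Fin n) (Fin 1) ℝ := Z - Pmat X * Z with hZpdef
  set d : ℝ := (Zpᵀ * Zp) 0 0 with hddef
  set Q : Matrix (Fin n) (Fin n) ℝ := Pvec Zp with hQdef
  set W : Matrix (Fin n) (Fin (k + 1)) ℝ := appendCol X Z with hWdef
  -- basic facts about X
  have hXdet : IsUnit (Xᵀ * X).det := (Matrix.isUnit_iff_isUnit_det _).mp hX
  have hinv1 : (Xᵀ * X)⁻¹ * (Xᵀ * X) = 1 := Matrix.nonsing_inv_mul _ hXdet
  have hinv2 : (Xᵀ * X) * (Xᵀ * X)⁻¹ = 1 := Matrix.mul_nonsing_inv _ hXdet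
  have hPX : P * X = X := by
    show X * (Xᵀ * X)⁻¹ * Xᵀ * X = X
    rw [Matrix.mul_assoc, Matrix.mul_assoc, hinv1, Matrix.mul_one]
  have hPsym : Pᵀ = P := by
    show (X * (Xᵀ * X)⁻¹ * Xᵀ)ᵀ = X * (Xᵀ * X)⁻¹ * Xᵀ
    rw [Matrix.transpose_mul, Matrix.transpose_mul, Matrix.transpose_transpose,
      Matrix.transpose_nonsing_inv, Matrix.transpose_mul, Matrix.transpose_transpose,
      Matrix.mul_assoc]
  have hXtP : Xᵀ * P = Xᵀ := by
    have := congrArg Matrix.transpose hPX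
    rwa [Matrix.transpose_mul, hPsym] at this
  have hXtZp : Xᵀ * Zp = 0 := by
    rw [hZpdef, Matrix.mul_sub, ← Matrix.mul_assoc, hXtP, sub_self]
  have hPZp : P * Zp = 0 := by
    show X * (Xᵀ * X)⁻¹ * Xᵀ * Zp = 0
    rw [Matrix.mul_assoc, hXtZp, Matrix.mul_zero]
  have hZptX : Zpᵀ * X = 0 := by
    have := congrArg Matrix.transpose hXtZp
    rwa [Matrix.transpose_mul, Matrix.transpose_transpose, Matrix.transpose_zero] at this
  have hZptP : Zpᵀ * P = 0 := by
    have := congrArg Matrix.transpose hPZp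
    rwa [Matrix.transpose_mul, hPsym, Matrix.transpose_zero] at this
  -- d ≠ 0
  have hdval : d = (fun i => Zp i 0) ⬝ᵥ (fun i => Zp i 0) := by
    simp [hddef, Matrix.mul_apply, dotProduct, Matrix.transpose_apply]
  have hd : d ≠ 0 := by
    intro h0
    apply hZperp
    have hv : (fun i => Zp i 0) = (0 : Fin n → ℝ) :=
      dotProduct_self_eq_zero.mp (by rw [← hdval, h0])
    have : Zp = 0 := by
      ext i j
      have hj : j = 0 := Subsingleton.elim _ _
      subst hj
      exact congrFun hv i
    rwa [hZpdef] at this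
  have hZpZp : Zpᵀ * Zp = d • (1 : Matrix (Fin 1) (Fin 1) ℝ) := by
    ext i j
    have hi : i = 0 := Subsingleton.elim _ _
    have hj : j = 0 := Subsingleton.elim _ _
    subst hi; subst hj
    simp [hddef]
  have hZsplit : Z = Zp + P * Z := by
    rw [hPdef, hZpdef]
    abel
  have hZptZ : Zpᵀ * Z = d • (1 : Matrix (Fin 1) (Fin 1) ℝ) := by
    conv_lhs => rw [hZsplit]
    rw [Matrix.mul_add, ← Matrix.mul_assoc, hZptP, Matrix.zero_mul, add_zero, hZpZp]
  -- facts about Q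
  have hQval : Q = d⁻¹ • (Zp * Zpᵀ) := rfl
  have hQsym : Qᵀ = Q := by
    rw [hQval, Matrix.transpose_smul, Matrix.transpose_mul, Matrix.transpose_transpose]
  have hPQ : P * Q = 0 := by
    rw [hQval, Matrix.mul_smul, ← Matrix.mul_assoc, hPZp, Matrix.zero_mul, smul_zero]
  have hQP : Q * P = 0 := by
    rw [hQval, Matrix.smul_mul, Matrix.mul_assoc, hZptP, Matrix.mul_zero, smul_zero]
  have hQX : Q * X = 0 := by
    rw [hQval, Matrix.smul_mul, Matrix.mul_assoc, hZptX, Matrix.mul_zero, smul_zero]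
  have hQZ : Q * Z = Zp := by
    rw [hQval, Matrix.smul_mul, Matrix.mul_assoc, hZptZ, Matrix.mul_smul, Matrix.mul_one,
      smul_smul, inv_mul_cancel₀ hd, one_smul]
  have hQZp : Q * Zp = Zp := by
    rw [hQval, Matrix.smul_mul, Matrix.mul_assoc, hZpZp, Matrix.mul_smul, Matrix.mul_one,
      smul_smul, inv_mul_cancel₀ hd, one_smul]
  have hQQ : Q * Q = Q := by
    nth_rewrite 1 [hQval]
    rw [Matrix.smul_mul, Matrix.mul_assoc]
    have : Zpᵀ * Q = Zpᵀ := by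
      have := congrArg Matrix.transpose hQZp
      rwa [Matrix.transpose_mul, hQsym] at this
    rw [this, hQval]
  -- the all-ones column
  set ι : Matrix (Fin n) (Fin 1) ℝ := Matrix.of (fun _ _ => (1 : ℝ)) with hιdef
  have hPι : P * ι = ι := by
    obtain ⟨v, hv⟩ := hiota
    have hXv : X * Matrix.of (fun j (_ : Fin 1) => v j) = ι := by
      ext i j
      simpa [hιdef, Matrix.mul_apply, Matrix.mulVec, dotProduct] using congrFun hv i
    rw [← hXv, ← Matrix.mul_assoc, hPX]
  have hιtP : ιᵀ * P = ιᵀ := by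
    have := congrArg Matrix.transpose hPι
    rwa [Matrix.transpose_mul, hPsym] at this
  have hιtZp : ιᵀ * Zp = 0 := by
    rw [hZpdef, Matrix.mul_sub, ← Matrix.mul_assoc, hιtP, sub_self]
  have hM0 : M0 n = 1 - (n : ℝ)⁻¹ • (ι * ιᵀ) := by
    unfold M0
    congr 1
    congr 1
    ext i j
    simp [hιdef, Matrix.mul_apply]
  have hM0Q : M0 n * Q = Q := by
    rw [hM0, Matrix.sub_mul, Matrix.one_mul, Matrix.smul_mul, hQval, Matrix.mul_smul,
      Matrix.mul_assoc, ← Matrix.mul_assoc ιᵀ, hιtZp, Matrix.zero_mul, Matrix.mul_zero,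
      smul_zero, smul_zero, sub_zero]
  have hQM0 : Q * M0 n = Q := by
    have hM0sym : (M0 n)ᵀ = M0 n := by
      rw [hM0]
      simp [Matrix.transpose_sub, Matrix.transpose_smul, Matrix.transpose_mul,
        Matrix.transpose_transpose]
    have := congrArg Matrix.transpose hM0Q
    rwa [Matrix.transpose_mul, hM0sym, hQsym] at this
  -- invertibility of WᵀW
  have hWdet : IsUnit (Wᵀ * W).det := by
    rw [isUnit_iff_ne_zero]
    intro h0
    obtain ⟨u, hu, huv⟩ := Matrix.exists_mulVec_eq_zero_iff.mpr h0
    have hWu : W *ᵥ u = 0 := by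
      have h1 : (W *ᵥ u) ⬝ᵥ (W *ᵥ u) = 0 := by
        have h2 : u ⬝ᵥ ((Wᵀ * W) *ᵥ u) = 0 := by rw [huv]; simp
        rwa [← Matrix.mulVec_mulVec, Matrix.dotProduct_mulVec, Matrix.vecMul_transpose] at h2
      exact dotProduct_self_eq_zero.mp h1
    rw [hWdef, mulVec_appendCol'] at hWu
    set a : Fin k → ℝ := fun p => u p.castSucc with hadef
    set b : ℝ := u (Fin.last k) with hbdef
    -- b = 0
    have hzpX : ∀ w : Fin k → ℝ, (fun i => Zp i 0) ⬝ᵥ (X *ᵥ w) = 0 := by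
      intro w
      rw [Matrix.dotProduct_mulVec]
      have : Matrix.vecMul (fun i => Zp i 0) X = 0 := by
        ext j
        have := congrFun (congrFun hZptX 0) j
        simpa [Matrix.vecMul, dotProduct, Matrix.mul_apply] using this
      rw [this]
      simp
    have hzpZ : (fun i => Zp i 0) ⬝ᵥ (fun i => Z i 0) = d := by
      have := congrFun (congrFun hZptZ 0) 0
      simpa [Matrix.mul_apply, dotProduct] using this
    have hb : b = 0 := by
      have h3 : (fun i => Zp i 0) ⬝ᵥ (X *ᵥ a + b • (fun i => Z i 0)) = 0 := by
        rw [hWu]; simp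
      rw [dotProduct_add, hzpX, dotProduct_smul, hzpZ, zero_add,
        smul_eq_mul] at h3
      exact (mul_eq_zero.mp h3).resolve_right hd
    have hXa : X *ᵥ a = 0 := by
      rw [hb, zero_smul, add_zero] at hWu
      exact hWu
    have ha : a = 0 := by
      have h4 : (Xᵀ * X) *ᵥ a = 0 := by
        rw [← Matrix.mulVec_mulVec, hXa, Matrix.mulVec_zero]
      calc a = (1 : Matrix (Fin k) (Fin k) ℝ) *ᵥ a := by simp
        _ = ((Xᵀ * X)⁻¹ * (Xᵀ * X)) *ᵥ a := by rw [hinv1]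
        _ = (Xᵀ * X)⁻¹ *ᵥ ((Xᵀ * X) *ᵥ a) := by rw [Matrix.mulVec_mulVec]
        _ = 0 := by rw [h4, Matrix.mulVec_zero]
    apply hu
    ext j
    refine Fin.lastCases ?_ ?_ j
    · exact hb
    · intro p
      exact congrFun ha p
  have hWinv1 : (Wᵀ * W)⁻¹ * (Wᵀ * W) = 1 := Matrix.nonsing_inv_mul _ hWdet
  have hPWW : Pmat W * W = W := by
    show W * (Wᵀ * W)⁻¹ * Wᵀ * W = W
    rw [Matrix.mul_assoc, Matrix.mul_assoc, hWinv1, Matrix.mul_one]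
  have hPWsym : (Pmat W)ᵀ = Pmat W := by
    show (W * (Wᵀ * W)⁻¹ * Wᵀ)ᵀ = W * (Wᵀ * W)⁻¹ * Wᵀ
    rw [Matrix.transpose_mul, Matrix.transpose_mul, Matrix.transpose_transpose,
      Matrix.transpose_nonsing_inv, Matrix.transpose_mul, Matrix.transpose_transpose,
      Matrix.mul_assoc]
  -- Pmat W = P + Q
  obtain ⟨hPWX, hPWZ⟩ : Pmat W * X = X ∧ Pmat W * Z = Z := by
    have := hPWW
    rw [hWdef, mul_appendCol'] at this
    exact appendCol_inj this
  have hPWP : Pmat W * P = P := by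
    show Pmat W * (X * (Xᵀ * X)⁻¹ * Xᵀ) = X * (Xᵀ * X)⁻¹ * Xᵀ
    rw [← Matrix.mul_assoc, ← Matrix.mul_assoc, hPWX]
  have hPWZp : Pmat W * Zp = Zp := by
    rw [hZpdef, Matrix.mul_sub, hPWZ]
    show Z - Pmat W * (P * Z) = Z - P * Z
    rw [← Matrix.mul_assoc, hPWP]
  have hPWQ : Pmat W * Q = Q := by
    rw [hQval, Matrix.mul_smul, ← Matrix.mul_assoc, hPWZp]
  have hPWE : Pmat W * (P + Q) = P + Q := by
    rw [Matrix.mul_add, hPWP, hPWQ]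
  have hEsym : (P + Q)ᵀ = P + Q := by
    rw [Matrix.transpose_add, hPsym, hQsym]
  have hEPW : (P + Q) * Pmat W = P + Q := by
    have := congrArg Matrix.transpose hPWE
    rwa [Matrix.transpose_mul, hEsym, hPWsym] at this
  have hEW : (P + Q) * W = W := by
    have hPZZp : P * Z + Zp = Z := by
      rw [hPdef, hZpdef]; abel
    rw [hWdef, mul_appendCol', Matrix.add_mul, hPX, hQX, add_zero, Matrix.add_mul, hQZ, hPZZp]
  have hPW : Pmat W = P + Q := by
    have h5 : (P + Q) * Pmat W = Pmat W := by
      show (P + Q) * (W * (Wᵀ * W)⁻¹ * Wᵀ) = W * (Wᵀ * W)⁻¹ * Wᵀ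
      rw [← Matrix.mul_assoc, ← Matrix.mul_assoc, hEW]
    rw [← h5, hEPW]
  -- final decomposition
  have hkey : (P + Q) * M0 n * (P + Q) = P * M0 n * P + Q * M0 n * Q := by
    have h6 : P * M0 n * Q = 0 := by
      rw [Matrix.mul_assoc, hM0Q, hPQ]
    have h7 : Q * M0 n * P = 0 := by
      rw [hQM0, hQP]
    rw [Matrix.add_mul, Matrix.add_mul, Matrix.mul_add, Matrix.mul_add, h6, h7]
    abel
  unfold totalR2
  rw [hPW, ← add_div]
  congr 1
  have hkey2 : (P + Q) * (M0 n * (P + Q)) = P * M0 n * P + Q * M0 n * Q := by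
    rw [← Matrix.mul_assoc, hkey]
  have h8 : Yᵀ * (P + Q) * M0 n * (P + Q) * Y =
      Yᵀ * P * M0 n * P * Y + Yᵀ * Q * M0 n * Q * Y := by
    rw [Matrix.mul_assoc (Yᵀ * (P + Q)) (M0 n) (P + Q),
      Matrix.mul_assoc Yᵀ (P + Q) (M0 n * (P + Q)), hkey2, Matrix.mul_add, Matrix.add_mul]
    congr 1
    · rw [← Matrix.mul_assoc Yᵀ (P * M0 n) P, ← Matrix.mul_assoc Yᵀ P (M0 n)]
    · rw [← Matrix.mul_assoc Yᵀ (Q * M0 n) Q, ← Matrix.mul_assoc Yᵀ Q (M0 n)]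
  rw [h8]
  simp [Matrix.add_apply]
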